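/- Let f and g be tropical polynomials in n variables with Trop(f) ⊆ Trop(g). Then there exists a single real number t₀ > 0 such that for every point w ∈ N(g) there is a translation s : ℝ^{n+1} → ℝ^{n+1} with w ∈ s(t₀·N(f)) and s(t₀·N(f)) ⊆ N(g); that is, a shifted copy of the homothety t₀·N(f) is inscribed in N(g) at an arbitrarily chosen point of N(g). -/

import Mathlib

open Finset

/-- A tropical polynomial in `n` variables: `k ≥ 1` monomials with exponent
vectors `a i : Fin n → ℕ` and coefficients `c i : ℝ`, the pairs `(a i, c i)`
being pairwise distinct. -/
structure TropPoly (n : ℕ) where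
  k : ℕ
  hk : 0 < k
  a : Fin k → Fin n → ℕ
  c : Fin k → ℝ
  distinct : Function.Injective (fun i => (a i, c i))

namespace TropPoly

variable {n : ℕ}

/-- Value of the `i`-th tropical monomial at `x`: `⟨a i, x⟩ + c i`. -/
def mono (f : TropPoly n) (i : Fin f.k) (x : Fin n → ℝ) : ℝ :=
  (∑ j, (f.a i j : ℝ) * x j) + f.c i

/-- Value of the tropical polynomial: `f(x) = min_i (⟨a i, x⟩ + c i)`. -/
def eval (f : TropPoly n) (x : Fin n → ℝ) : ℝ :=
  Finset.univ.inf' ⟨⟨0, f.hk⟩, Finset.mem_univ _⟩ (fun i => f.mono i x)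

/-- The tropical hypersurface `Trop(f)`: points where the minimum is attained
at least at two distinct monomials. -/
def tropSet (f : TropPoly n) : Set (Fin n → ℝ) :=
  {x | ∃ i j : Fin f.k, i ≠ j ∧ f.mono i x = f.eval x ∧ f.mono j x = f.eval x}

/-- The Newton polyhedron `N(f) ⊆ ℝ^{n+1}`: the convex hull of the union of
the vertical rays `{(a i, c) : c ≥ c i}`. -/
def newton (f : TropPoly n) : Set ((Fin n → ℝ) × ℝ) :=
  convexHull ℝ {p | ∃ i : Fin f.k, p.1 = (fun j => (f.a i j : ℝ)) ∧ f.c i ≤ p.2}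

end TropPoly

/-- The linear functional `φ_x(z, a) = ⟨x, z⟩ + a` on `ℝ^{n+1}`. -/
def phi {n : ℕ} (x : Fin n → ℝ) (p : (Fin n → ℝ) × ℝ) : ℝ :=
  (∑ j, x j * p.1 j) + p.2

/-- The convex cone generated by a set `S`: all nonnegative linear
combinations of elements of `S`. -/
def coneGen {E : Type*} [AddCommMonoid E] [Module ℝ E] (S : Set E) : Set E :=
  {y | ∃ (m : ℕ) (t : Fin m → ℝ) (p : Fin m → E),
    (∀ i, 0 ≤ t i) ∧ (∀ i, p i ∈ S) ∧ y = ∑ i, t i • p i}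

section Cone

variable {V : Type*} [NormedAddCommGroup V] [NormedSpace ℝ V]

lemma zero_mem_coneGen (S : Set V) : (0 : V) ∈ coneGen S :=
  ⟨0, Fin.elim0, Fin.elim0, fun i => i.elim0, fun i => i.elim0, by simp⟩

lemma mem_coneGen_of_mem {S : Set V} {v : V} (hv : v ∈ S) : v ∈ coneGen S :=
  ⟨1, fun _ => 1, fun _ => v, fun _ => zero_le_one, fun _ => hv, by simp⟩

lemma coneGen_mono {S T : Set V} (h : S ⊆ T) : coneGen S ⊆ coneGen T := by
  rintro y ⟨m, t, p, h1, h2, rfl⟩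
  exact ⟨m, t, p, h1, fun i => h (h2 i), rfl⟩

lemma coneGen_smul {S : Set V} {r : ℝ} (hr : 0 ≤ r) {y : V} (hy : y ∈ coneGen S) :
    r • y ∈ coneGen S := by
  obtain ⟨m, t, p, h1, h2, rfl⟩ := hy
  refine ⟨m, fun i => r * t i, p, fun i => mul_nonneg hr (h1 i), h2, ?_⟩
  rw [Finset.smul_sum]
  exact Finset.sum_congr rfl fun i _ => by rw [smul_smul]

lemma coneGen_add {S : Set V} {y z : V} (hy : y ∈ coneGen S) (hz : z ∈ coneGen S) :
    y + z ∈ coneGen S := by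
  obtain ⟨m, t, p, h1, h2, rfl⟩ := hy
  obtain ⟨m', t', p', h1', h2', rfl⟩ := hz
  refine ⟨m + m', Fin.append t t', Fin.append p p', ?_, ?_, ?_⟩
  · intro i
    refine Fin.addCases (fun j => ?_) (fun j => ?_) i
    · simpa [Fin.append_left] using h1 j
    · simpa [Fin.append_right] using h1' j
  · intro i
    refine Fin.addCases (fun j => ?_) (fun j => ?_) i
    · simpa [Fin.append_left] using h2 j
    · simpa [Fin.append_right] using h2' j
  · rw [Fin.sum_univ_add]
    congr 1
    · exact Finset.sum_congr rfl fun j _ => by simp [Fin.append_left]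
    · exact Finset.sum_congr rfl fun j _ => by simp [Fin.append_right]

lemma coneGen_convex (S : Set V) : Convex ℝ (coneGen S) :=
  fun _ hx _ hy a b ha hb _ => coneGen_add (coneGen_smul ha hx) (coneGen_smul hb hy)

private lemma cone_carath_aux (S : Set V) :
    ∀ (m : ℕ) (t : Fin m → ℝ) (p : Fin m → V), (∀ i, 0 ≤ t i) → (∀ i, p i ∈ S) →
      ∃ T : Set V, T ⊆ S ∧ T.Finite ∧ LinearIndependent ℝ ((↑) : T → V) ∧
        (∑ i, t i • p i) ∈ coneGen T := by
  intro m
  induction m with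
  | zero =>
    intro t p _ _
    exact ⟨∅, by simp, Set.finite_empty, linearIndependent_empty ℝ V,
      by simpa using zero_mem_coneGen (∅ : Set V)⟩
  | succ m ih =>
    intro t p h1 h2
    by_cases hLI : LinearIndependent ℝ p
    · exact ⟨Set.range p, Set.range_subset_iff.mpr h2, Set.finite_range p, (linearIndepOn_id_range_iff hLI.injective).mpr hLI,
        ⟨m + 1, t, p, h1, fun i => Set.mem_range_self i, rfl⟩⟩
    · classical
      obtain ⟨g₀, hg₀, i₀, hgi₀⟩ := Fintype.not_linearIndependent_iff.mp hLI
      have main : ∀ g : Fin (m + 1) → ℝ, (∑ i, g i • p i = 0) → (∃ i, 0 < g i) →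
          ∃ T : Set V, T ⊆ S ∧ T.Finite ∧ LinearIndependent ℝ ((↑) : T → V) ∧
            (∑ i, t i • p i) ∈ coneGen T := by
        intro g hg ⟨iP, hiP⟩
        set P : Finset (Fin (m + 1)) := Finset.univ.filter (fun i => 0 < g i) with hPdef
        have hPne : P.Nonempty := ⟨iP, by simp [hPdef, hiP]⟩
        set θ : ℝ := P.inf' hPne (fun i => t i / g i) with hθdef
        obtain ⟨i₁, hi₁P, hi₁⟩ := Finset.exists_mem_eq_inf' hPne (fun i => t i / g i)
        have hgi₁ : 0 < g i₁ := by
          have := Finset.mem_filter.mp hi₁P; exact this.2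
        have hθ0 : 0 ≤ θ := by
          rw [hθdef, hi₁]; exact div_nonneg (h1 i₁) hgi₁.le
        set t' : Fin (m + 1) → ℝ := fun i => t i - θ * g i with ht'def
        have ht'0 : ∀ i, 0 ≤ t' i := by
          intro i
          by_cases hgi : 0 < g i
          · have hle : θ ≤ t i / g i := Finset.inf'_le _ (by simp [hPdef, hgi])
            have := (le_div_iff₀ hgi).mp hle
            simp only [ht'def]; linarith
          · push_neg at hgi
            have : θ * g i ≤ 0 := mul_nonpos_of_nonneg_of_nonpos hθ0 hgi
            simp only [ht'def]; linarith [h1 i]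
        have ht'i₁ : t' i₁ = 0 := by
          simp only [ht'def, hθdef, hi₁]
          rw [div_mul_cancel₀ _ (ne_of_gt hgi₁)]
          ring
        have hsum : ∑ i, t' i • p i = ∑ i, t i • p i := by
          simp only [ht'def, sub_smul, Finset.sum_sub_distrib, smul_smul]
          have : ∑ i, (θ * g i) • p i = θ • ∑ i, g i • p i := by
            rw [Finset.smul_sum]
            exact Finset.sum_congr rfl fun i _ => by rw [smul_smul]
          rw [this, hg, smul_zero, sub_zero]
        obtain ⟨T, hT1, hT2, hT3, hT4⟩ := ih (fun j => t' (i₁.succAbove j))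
          (fun j => p (i₁.succAbove j)) (fun j => ht'0 _) (fun j => h2 _)
        have hsum2 : ∑ j : Fin m, t' (i₁.succAbove j) • p (i₁.succAbove j) = ∑ i, t i • p i := by
          have hs := Fin.sum_univ_succAbove (fun i => t' i • p i) i₁
          rw [← hsum, hs, ht'i₁, zero_smul, zero_add]
        rw [hsum2] at hT4
        exact ⟨T, hT1, hT2, hT3, hT4⟩
      rcases hgi₀.lt_or_gt with hneg | hpos
      · refine main (-g₀) (by simpa using hg₀) ⟨i₀, by simpa using hneg⟩
      · exact main g₀ hg₀ ⟨i₀, hpos⟩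

lemma isClosed_coneGen_of_li [FiniteDimensional ℝ V] {T : Set V} (hTf : T.Finite)
    (hli : LinearIndependent ℝ ((↑) : T → V)) : IsClosed (coneGen T) := by
  classical
  haveI : Fintype T := hTf.fintype
  let L : (T → ℝ) →ₗ[ℝ] V :=
    { toFun := fun f => ∑ i : T, f i • (i : V)
      map_add' := fun f g => by
        simp [add_smul, Finset.sum_add_distrib]
      map_smul' := fun r f => by
        simp [Finset.smul_sum, smul_smul] }
  have hLapp : ∀ f, L f = ∑ i : T, f i • (i : V) := fun f => rfl
  have hinj : Function.Injective L := by
    intro f g hfg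
    have h0 : L (f - g) = 0 := by rw [map_sub, hfg, sub_self]
    have : ∀ i, (f - g) i = 0 := by
      intro i
      exact Fintype.linearIndependent_iff.mp hli (f - g) h0 i
    funext i
    have := this i
    simpa [sub_eq_zero] using this
  have hce : Topology.IsClosedEmbedding L :=
    LinearMap.isClosedEmbedding_of_injective (LinearMap.ker_eq_bot.mpr hinj)
  have hset : coneGen T = L '' {f : T → ℝ | ∀ i, 0 ≤ f i} := by
    ext y
    constructor
    · rintro ⟨m, t, p, h1, h2, rfl⟩
      set gmap : Fin m → T := fun i => ⟨p i, h2 i⟩ with hgmap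
      refine ⟨fun v => ∑ i ∈ Finset.univ.filter (fun i => gmap i = v), t i,
        fun v => Finset.sum_nonneg fun i _ => h1 i, ?_⟩
      rw [hLapp]
      rw [← Finset.sum_fiberwise (Finset.univ : Finset (Fin m)) gmap (fun i => t i • p i)]
      refine Finset.sum_congr rfl fun v _ => ?_
      rw [Finset.sum_smul]
      refine Finset.sum_congr rfl fun i hi => ?_
      have hv : gmap i = v := (Finset.mem_filter.mp hi).2
      rw [← hv]
    · rintro ⟨f, hf, rfl⟩
      refine ⟨Fintype.card T, fun i => f ((Fintype.equivFin T).symm i),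
        fun i => ((Fintype.equivFin T).symm i : V), fun i => hf _,
        fun i => ((Fintype.equivFin T).symm i).2, ?_⟩
      rw [hLapp, ← Equiv.sum_comp (Fintype.equivFin T).symm (fun v => f v • (v : V))]
  rw [hset]
  have hcl : IsClosed {f : T → ℝ | ∀ i, 0 ≤ f i} := by
    have : {f : T → ℝ | ∀ i, 0 ≤ f i} = ⋂ i : T, {f : T → ℝ | 0 ≤ f i} := by
      ext f; simp
    rw [this]
    exact isClosed_iInter fun i => isClosed_le continuous_const (continuous_apply i)
  exact hce.isClosedMap _ hcl

lemma isClosed_coneGen [FiniteDimensional ℝ V] {S : Set V} (hS : S.Finite) :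
    IsClosed (coneGen S) := by
  have heq : coneGen S =
      ⋃ T ∈ {T : Set V | T ⊆ S ∧ T.Finite ∧ LinearIndependent ℝ ((↑) : T → V)}, coneGen T := by
    apply Set.Subset.antisymm
    · intro y hy
      obtain ⟨m, t, p, h1, h2, rfl⟩ := hy
      obtain ⟨T, hT1, hT2, hT3, hT4⟩ := cone_carath_aux S m t p h1 h2
      exact Set.mem_biUnion ⟨hT1, hT2, hT3⟩ hT4
    · exact Set.iUnion₂_subset fun T hT => coneGen_mono hT.1
  rw [heq]
  refine Set.Finite.isClosed_biUnion ?_ fun T hT => isClosed_coneGen_of_li hT.2.1 hT.2.2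
  exact (hS.finite_subsets.subset fun T hT => hT.1)

lemma coneGen_separation [FiniteDimensional ℝ V] {S : Set V} (hS : S.Finite) {D : V}
    (hD : D ∉ coneGen S) :
    ∃ ψ : V →L[ℝ] ℝ, (∀ v ∈ S, 0 ≤ ψ v) ∧ ψ D < 0 := by
  obtain ⟨ψ, u, hu1, hu2⟩ :=
    geometric_hahn_banach_point_closed (coneGen_convex S) (isClosed_coneGen hS) hD
  have hu0 : u < 0 := by simpa using hu2 0 (zero_mem_coneGen S)
  refine ⟨ψ, fun v hv => ?_, hu1.trans hu0⟩
  by_contra hneg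
  push_neg at hneg
  set r : ℝ := (u - 1) / ψ v with hr
  have hr0 : 0 < r := div_pos_of_neg_of_neg (by linarith) hneg
  have hmem := hu2 (r • v) (coneGen_smul hr0.le (mem_coneGen_of_mem hv))
  rw [map_smul, smul_eq_mul] at hmem
  have : r * ψ v = u - 1 := div_mul_cancel₀ _ (ne_of_lt hneg)
  linarith

end Cone

section Basics

variable {n : ℕ}

/-- The dot product on `Fin n → ℝ`. -/
def dotp (x z : Fin n → ℝ) : ℝ := ∑ j, x j * z j

lemma dotp_smul_left (r : ℝ) (x z : Fin n → ℝ) : dotp (r • x) z = r * dotp x z := by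
  simp only [dotp, Pi.smul_apply, smul_eq_mul, Finset.mul_sum]
  exact Finset.sum_congr rfl fun j _ => by ring

lemma phi_apply (x : Fin n → ℝ) (p : (Fin n → ℝ) × ℝ) : phi x p = dotp x p.1 + p.2 := rfl

/-- `phi x` as a linear map. -/
def phiL (x : Fin n → ℝ) : ((Fin n → ℝ) × ℝ) →ₗ[ℝ] ℝ where
  toFun := phi x
  map_add' := fun p q => by
    simp only [phi, Prod.fst_add, Prod.snd_add, Pi.add_apply, mul_add, Finset.sum_add_distrib]
    ring
  map_smul' := fun r p => by
    simp only [phi, Prod.smul_fst, Prod.smul_snd, Pi.smul_apply, smul_eq_mul, RingHom.id_apply]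
    rw [mul_add, Finset.mul_sum]
    congr 1
    exact Finset.sum_congr rfl fun j _ => by ring

lemma phi_smul (x : Fin n → ℝ) (r : ℝ) (p : (Fin n → ℝ) × ℝ) :
    phi x (r • p) = r * phi x p := by
  have h := (phiL x).map_smul r p
  simp only [phiL, LinearMap.coe_mk, AddHom.coe_mk, smul_eq_mul] at h
  exact h

lemma phi_add (x : Fin n → ℝ) (p q : (Fin n → ℝ) × ℝ) :
    phi x (p + q) = phi x p + phi x q := (phiL x).map_add p q

lemma phi_sub (x : Fin n → ℝ) (p q : (Fin n → ℝ) × ℝ) :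
    phi x (p - q) = phi x p - phi x q := by
  have h := (phiL x).map_sub p q
  simp only [phiL, LinearMap.coe_mk, AddHom.coe_mk] at h
  exact h

lemma phi_neg (x : Fin n → ℝ) (p : (Fin n → ℝ) × ℝ) : phi x (-p) = -phi x p := by
  have h := (phiL x).map_neg p
  simp only [phiL, LinearMap.coe_mk, AddHom.coe_mk] at h
  exact h

lemma phi_sum (x : Fin n → ℝ) {ι : Type*} (s : Finset ι) (F : ι → (Fin n → ℝ) × ℝ) :
    phi x (∑ i ∈ s, F i) = ∑ i ∈ s, phi x (F i) := by
  have h := map_sum (phiL x) F s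
  simp only [phiL, LinearMap.coe_mk, AddHom.coe_mk] at h
  exact h

lemma phi_shift (x0 x' : Fin n → ℝ) (l : ℝ) (p : (Fin n → ℝ) × ℝ) :
    phi (x0 + l • x') p = phi x0 p + l * dotp x' p.1 := by
  simp only [phi, dotp, Pi.add_apply, Pi.smul_apply, smul_eq_mul, add_mul,
    Finset.sum_add_distrib, Finset.mul_sum]
  have : ∀ j, l * x' j * p.1 j = l * (x' j * p.1 j) := fun j => by ring
  simp only [this]
  ring

lemma phi_smul_arg (x' : Fin n → ℝ) (s : ℝ) (p : (Fin n → ℝ) × ℝ) :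
    phi (s • x') p = s * dotp x' p.1 + p.2 := by
  simp only [phi_apply, dotp_smul_left]

/-- The `i`-th generating vertex of the Newton polyhedron. -/
def vtx (f : TropPoly n) (i : Fin f.k) : (Fin n → ℝ) × ℝ := (fun j => (f.a i j : ℝ), f.c i)

lemma phi_vtx (f : TropPoly n) (i : Fin f.k) (x : Fin n → ℝ) :
    phi x (vtx f i) = f.mono i x := by
  simp only [phi, vtx, TropPoly.mono]
  congr 1
  exact Finset.sum_congr rfl fun j _ => mul_comm _ _

lemma eval_le (f : TropPoly n) (x : Fin n → ℝ) (i : Fin f.k) : f.eval x ≤ f.mono i x :=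
  Finset.inf'_le _ (Finset.mem_univ i)

lemma exists_eval (f : TropPoly n) (x : Fin n → ℝ) : ∃ i, f.mono i x = f.eval x := by
  obtain ⟨i, _, hi⟩ := Finset.exists_mem_eq_inf' (⟨⟨0, f.hk⟩, Finset.mem_univ _⟩ :
    (Finset.univ : Finset (Fin f.k)).Nonempty) (fun i => f.mono i x)
  exact ⟨i, hi.symm⟩

lemma mono_smul_arg (f : TropPoly n) (i : Fin f.k) (lam : ℝ) (x' : Fin n → ℝ) :
    f.mono i (lam • x') = lam * dotp x' (fun j => (f.a i j : ℝ)) + f.c i := by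
  simp only [TropPoly.mono, Pi.smul_apply, smul_eq_mul, dotp, Finset.mul_sum]
  congr 1
  exact Finset.sum_congr rfl fun j _ => by ring

/-- The closed region where monomial `j` is minimal. -/
def Dset (g : TropPoly n) (j : Fin g.k) : Set (Fin n → ℝ) := {x | ∀ m, g.mono j x ≤ g.mono m x}

lemma Dset_eval {g : TropPoly n} {j : Fin g.k} {x : Fin n → ℝ} (hx : x ∈ Dset g j) :
    g.mono j x = g.eval x :=
  le_antisymm (Finset.le_inf' _ _ fun m _ => hx m) (eval_le g x j)

lemma mem_Dset_of_eval {g : TropPoly n} {j : Fin g.k} {x : Fin n → ℝ}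
    (hx : g.mono j x = g.eval x) : x ∈ Dset g j :=
  fun m => hx ▸ eval_le g x m

lemma mono_continuous (f : TropPoly n) (i : Fin f.k) : Continuous (f.mono i) := by
  apply Continuous.add ?_ continuous_const
  exact continuous_finset_sum _ fun j _ => continuous_const.mul (continuous_apply j)

lemma Dset_closed (g : TropPoly n) (j : Fin g.k) : IsClosed (Dset g j) := by
  have : Dset g j = ⋂ m, {x | g.mono j x ≤ g.mono m x} := by ext x; simp [Dset]
  rw [this]
  exact isClosed_iInter fun m => isClosed_le (mono_continuous g j) (mono_continuous g m)

lemma mono_combo (f : TropPoly n) (i : Fin f.k) {a b : ℝ} (hab : a + b = 1)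
    (x y : Fin n → ℝ) :
    f.mono i (a • x + b • y) = a * f.mono i x + b * f.mono i y := by
  simp only [TropPoly.mono, Pi.add_apply, Pi.smul_apply, smul_eq_mul, mul_add,
    Finset.sum_add_distrib]
  have h1 : ∀ j, (f.a i j : ℝ) * (a * x j) = a * ((f.a i j : ℝ) * x j) := fun j => by ring
  have h2 : ∀ j, (f.a i j : ℝ) * (b * y j) = b * ((f.a i j : ℝ) * y j) := fun j => by ring
  simp only [h1, h2, ← Finset.mul_sum]
  linear_combination f.c i * hab.symm

lemma Dset_convex (g : TropPoly n) (j : Fin g.k) : Convex ℝ (Dset g j) := by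
  intro x hx y hy a b ha hb hab
  intro m
  rw [mono_combo g j hab, mono_combo g m hab]
  exact add_le_add (mul_le_mul_of_nonneg_left (hx m) ha) (mul_le_mul_of_nonneg_left (hy m) hb)

lemma mono_perturb (f : TropPoly n) (i : Fin f.k) (x : Fin n → ℝ) (δ : ℝ) (k : Fin n) :
    f.mono i (x + δ • (Pi.single k 1 : Fin n → ℝ)) = f.mono i x + δ * (f.a i k : ℝ) := by
  classical
  simp only [TropPoly.mono, Pi.add_apply, Pi.smul_apply, smul_eq_mul, mul_add,
    Finset.sum_add_distrib]
  have : ∑ j, (f.a i j : ℝ) * (δ * (Pi.single k (1:ℝ) : Fin n → ℝ) j) = δ * (f.a i k : ℝ) := by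
    rw [Finset.sum_eq_single k]
    · rw [Pi.single_eq_same]; ring
    · intro j _ hjk
      rw [Pi.single_eq_of_ne hjk]; ring
    · intro hk
      exact absurd (Finset.mem_univ k) hk
  rw [this]
  ring

/-- Representation of continuous linear functionals on `(Fin n → ℝ) × ℝ`. -/
lemma clm_repr (ψ : ((Fin n → ℝ) × ℝ) →L[ℝ] ℝ) :
    ∀ p, ψ p = dotp (fun j => ψ (Pi.single j 1, 0)) p.1 + ψ (0, 1) * p.2 := by
  classical
  intro p
  have hdecomp : p = (∑ j, p.1 j • ((Pi.single j 1 : Fin n → ℝ), (0:ℝ)))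
      + p.2 • ((0 : Fin n → ℝ), (1:ℝ)) := by
    refine Prod.ext ?_ ?_
    · simp only [Prod.fst_add, Prod.fst_sum, Prod.smul_fst, Prod.smul_snd, smul_zero]
      rw [add_zero]
      have : ∀ j, p.1 j • (Pi.single j 1 : Fin n → ℝ) = Pi.single j (p.1 j) := by
        intro j
        rw [← Pi.single_smul, smul_eq_mul, mul_one]
      rw [Finset.sum_congr rfl fun j _ => this j, Finset.univ_sum_single]
    · simp only [Prod.snd_add, Prod.snd_sum, Prod.smul_snd, smul_zero, smul_eq_mul, mul_one]
      simp
  conv_lhs => rw [hdecomp]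
  rw [map_add, map_sum, map_smul]
  simp only [smul_eq_mul]
  congr 1
  · rw [dotp]
    refine Finset.sum_congr rfl fun j _ => ?_
    rw [map_smul, smul_eq_mul, mul_comm]
  · ring

end Basics

section Cover

variable {n : ℕ}

lemma interior_biUnion_empty {α : Type*} [TopologicalSpace α] {ι : Type*} (s : Finset ι)
    (C : ι → Set α) (hcl : ∀ i ∈ s, IsClosed (C i)) (hint : ∀ i ∈ s, interior (C i) = ∅) :
    interior (⋃ i ∈ s, C i) = ∅ := by
  classical
  induction s using Finset.induction_on with
  | empty => simp
  | @insert a s ha ih =>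
    rw [Finset.set_biUnion_insert]
    set T : Set α := ⋃ i ∈ s, C i with hT
    have hTcl : IsClosed T := isClosed_biUnion_finset fun i hi => hcl i (Finset.mem_insert_of_mem hi)
    have hTint : interior T = ∅ :=
      ih (fun i hi => hcl i (Finset.mem_insert_of_mem hi))
        (fun i hi => hint i (Finset.mem_insert_of_mem hi))
    have h1 : interior (C a ∪ T) \ C a ⊆ interior T := by
      apply interior_maximal
      · intro x hx
        exact (interior_subset hx.1).resolve_left hx.2
      · exact isOpen_interior.sdiff (hcl a (Finset.mem_insert_self a s))
    rw [hTint] at h1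
    have h2 : interior (C a ∪ T) ⊆ C a := Set.diff_eq_empty.mp (Set.subset_empty_iff.mp h1)
    have h3 : interior (C a ∪ T) ⊆ interior (C a) := interior_maximal h2 isOpen_interior
    rw [hint a (Finset.mem_insert_self a s)] at h3
    exact Set.subset_empty_iff.mp h3

lemma coverage (g : TropPoly n) : ∀ x, ∃ j, (interior (Dset g j)).Nonempty ∧ x ∈ Dset g j := by
  classical
  intro x
  by_contra hcon
  push_neg at hcon
  set bad : Finset (Fin g.k) :=
    Finset.univ.filter (fun j => ¬ (interior (Dset g j)).Nonempty) with hbad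
  set M : Set (Fin n → ℝ) :=
    ⋃ j ∈ Finset.univ.filter (fun j : Fin g.k => (interior (Dset g j)).Nonempty), Dset g j with hM
  have hxM : x ∉ M := by
    intro hx
    obtain ⟨j, hj, hxj⟩ := Set.mem_iUnion₂.mp hx
    exact hcon j (Finset.mem_filter.mp hj).2 hxj
  have hMcl : IsClosed M := isClosed_biUnion_finset fun j _ => Dset_closed g j
  have hsub : Mᶜ ⊆ ⋃ j ∈ bad, Dset g j := by
    intro y hy
    obtain ⟨i, hi⟩ := exists_eval g y
    have hyD : y ∈ Dset g i := mem_Dset_of_eval hi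
    by_cases hgood : (interior (Dset g i)).Nonempty
    · exact absurd (Set.mem_iUnion₂.mpr ⟨i, Finset.mem_filter.mpr ⟨Finset.mem_univ i, hgood⟩, hyD⟩) hy
    · exact Set.mem_iUnion₂.mpr ⟨i, Finset.mem_filter.mpr ⟨Finset.mem_univ i, hgood⟩, hyD⟩
  have hint : interior (⋃ j ∈ bad, Dset g j) = ∅ :=
    interior_biUnion_empty _ _ (fun j _ => Dset_closed g j)
      (fun j hj => Set.not_nonempty_iff_eq_empty.mp (Finset.mem_filter.mp hj).2)
  have hx' : x ∈ interior (⋃ j ∈ bad, Dset g j) :=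
    interior_maximal hsub hMcl.isOpen_compl hxM
  rw [hint] at hx'
  exact hx'

lemma aux_le_zero {v C : ℝ} (h : ∀ a : ℝ, 0 < a → a ≤ 1 → v ≤ a * C) : v ≤ 0 := by
  by_contra hv
  push_neg at hv
  have hC : v ≤ C := by simpa using h 1 one_pos le_rfl
  have hCpos : 0 < C := lt_of_lt_of_le hv hC
  have ha : 0 < v / (2 * C) := by positivity
  have ha1 : v / (2 * C) ≤ 1 := by
    rw [div_le_one (by positivity)]
    linarith
  have hh := h _ ha ha1
  have heq : v / (2 * C) * C = v / 2 := by
    field_simp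
  rw [heq] at hh
  linarith

lemma exists_sigma (f g : TropPoly n) (h : f.tropSet ⊆ g.tropSet) (j : Fin g.k)
    (hj : (interior (Dset g j)).Nonempty) :
    ∃ σ : Fin f.k, ∀ x ∈ Dset g j, ∀ l, f.mono σ x ≤ f.mono l x := by
  classical
  obtain ⟨x0, hx0⟩ := hj
  set U := interior (Dset g j) with hUdef
  have hUopen : IsOpen U := isOpen_interior
  have hUsub : U ⊆ Dset g j := interior_subset
  have hUg : ∀ x ∈ U, x ∉ g.tropSet := by
    intro x hx htrop
    obtain ⟨i1, i2, hne, h1, h2⟩ := htrop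
    obtain ⟨i, hij, hieq⟩ : ∃ i, i ≠ j ∧ g.mono i x = g.eval x := by
      by_cases hh : i1 = j
      · exact ⟨i2, fun hc => hne (hh.trans hc.symm), h2⟩
      · exact ⟨i1, hh, h1⟩
    obtain ⟨ε, hε, hball⟩ := Metric.isOpen_iff.mp hUopen x hx
    have hjx : g.mono j x = g.eval x := Dset_eval (hUsub hx)
    have hcoord : ∀ k : Fin n, (g.a i k : ℝ) = (g.a j k : ℝ) := by
      intro k
      have hpm : ∀ δ : ℝ, |δ| < ε → 0 ≤ δ * ((g.a i k : ℝ) - (g.a j k : ℝ)) := by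
        intro δ hδ
        have hmem : x + δ • (Pi.single k 1 : Fin n → ℝ) ∈ Dset g j := by
          apply hUsub; apply hball
          rw [Metric.mem_ball, dist_pi_lt_iff hε]
          intro b
          rw [Real.dist_eq]
          simp only [Pi.add_apply, Pi.smul_apply, smul_eq_mul, add_sub_cancel_left]
          by_cases hbk : b = k
          · subst hbk; rw [Pi.single_eq_same]; simpa using hδ
          · rw [Pi.single_eq_of_ne hbk]; simpa using hε
        have hle := hmem i
        rw [mono_perturb, mono_perturb] at hle
        have : g.mono i x = g.mono j x := by rw [hieq, hjx]
        nlinarith [hle]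
      have hp1 := hpm (ε / 2) (by rw [abs_of_pos (by linarith)]; linarith)
      have hp2 := hpm (-(ε / 2)) (by rw [abs_neg, abs_of_pos (by linarith)]; linarith)
      have h0 : ε / 2 * ((g.a i k : ℝ) - (g.a j k : ℝ)) = 0 := by linarith
      rcases mul_eq_zero.mp h0 with hcase | hcase
      · linarith
      · linarith
    apply hij
    apply g.distinct
    have hac : g.a i = g.a j := funext fun k => Nat.cast_injective (hcoord k)
    have hcc : g.c i = g.c j := by
      have hmm : g.mono i x = g.mono j x := by rw [hieq, hjx]
      simp only [TropPoly.mono, hac] at hmm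
      linarith
    show (g.a i, g.c i) = (g.a j, g.c j)
    rw [hac, hcc]
  have hUf : ∀ x ∈ U, x ∉ f.tropSet := fun x hx hf => hUg x hx (h hf)
  obtain ⟨σ, hσ0⟩ := exists_eval f x0
  have hpre : IsPreconnected U := ((Dset_convex g j).interior).isPreconnected
  set u1 : Set (Fin n → ℝ) :=
    (⋃ l ∈ Finset.univ.filter (fun l : Fin f.k => l ≠ σ), Dset f l)ᶜ with hu1def
  set u2 : Set (Fin n → ℝ) := (Dset f σ)ᶜ with hu2def
  have hu1 : IsOpen u1 := (isClosed_biUnion_finset fun l _ => Dset_closed f l).isOpen_compl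
  have hu2 : IsOpen u2 := (Dset_closed f σ).isOpen_compl
  have htwo : ∀ y ∈ U, ∀ l, l ≠ σ → y ∈ Dset f l → y ∉ Dset f σ := by
    intro y hy l hl hyl hyσ
    exact hUf y hy ⟨l, σ, hl, Dset_eval hyl, Dset_eval hyσ⟩
  have hcover : U ⊆ u1 ∪ u2 := by
    intro y hy
    by_cases hyσ : y ∈ Dset f σ
    · left
      intro hmem
      obtain ⟨l, hl, hyl⟩ := Set.mem_iUnion₂.mp hmem
      exact htwo y hy l (Finset.mem_filter.mp hl).2 hyl hyσ
    · right; exact hyσ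
  have hdisj : ∀ y, ¬ (y ∈ U ∩ (u1 ∩ u2)) := by
    rintro y ⟨hyU, hy1, hy2⟩
    obtain ⟨l, hl⟩ := exists_eval f y
    have hyD : y ∈ Dset f l := mem_Dset_of_eval hl
    by_cases hlσ : l = σ
    · exact hy2 (hlσ ▸ hyD)
    · exact hy1 (Set.mem_iUnion₂.mpr ⟨l, Finset.mem_filter.mpr ⟨Finset.mem_univ l, hlσ⟩, hyD⟩)
  have hx0u1 : x0 ∈ U ∩ u1 := by
    refine ⟨hx0, ?_⟩
    intro hmem
    obtain ⟨l, hl, hyl⟩ := Set.mem_iUnion₂.mp hmem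
    exact htwo x0 hx0 l (Finset.mem_filter.mp hl).2 hyl (mem_Dset_of_eval hσ0)
  have hUσ : ∀ y ∈ U, y ∈ Dset f σ := by
    by_contra hcc
    push_neg at hcc
    obtain ⟨y, hyU, hyσ⟩ := hcc
    obtain ⟨zz, hzz⟩ := hpre u1 u2 hu1 hu2 hcover ⟨x0, hx0u1⟩ ⟨y, hyU, hyσ⟩
    exact hdisj zz hzz
  refine ⟨σ, fun x hx l => ?_⟩
  have hkey : ∀ a : ℝ, 0 < a → a ≤ 1 →
      f.mono σ x - f.mono l x ≤
        a * ((f.mono σ x - f.mono l x) + (f.mono l x0 - f.mono σ x0)) := by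
    intro a ha ha1
    have hmem : a • x0 + (1 - a) • x ∈ U :=
      (Dset_convex g j).combo_interior_self_mem_interior hx0 hx ha (by linarith) (by ring)
    have hcc := hUσ _ hmem l
    rw [mono_combo f σ (show a + (1 - a) = 1 by ring), mono_combo f l (show a + (1 - a) = 1 by ring)] at hcc
    linarith [hcc]
  have hv := aux_le_zero hkey
  linarith

end Cover
section Newton

open Pointwise

variable {n : ℕ}

/-- Generators of the Newton polyhedron coming from monomials whose minimality
region has nonempty interior. -/
def gensJ (g : TropPoly n) : Set ((Fin n → ℝ) × ℝ) :=
  {p | ∃ j : Fin g.k, (interior (Dset g j)).Nonempty ∧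
    p.1 = (fun k => (g.a j k : ℝ)) ∧ g.c j ≤ p.2}

lemma gens_phi_le {f : TropPoly n} {p : (Fin n → ℝ) × ℝ}
    (hp : ∃ i : Fin f.k, p.1 = (fun j => (f.a i j : ℝ)) ∧ f.c i ≤ p.2) (x : Fin n → ℝ) :
    f.eval x ≤ phi x p := by
  obtain ⟨i, h1, h2⟩ := hp
  have h3 : f.mono i x = dotp x p.1 + f.c i := by
    rw [h1, ← phi_vtx f i x]; rfl
  calc f.eval x ≤ f.mono i x := eval_le f x i
    _ ≤ dotp x p.1 + p.2 := by rw [h3]; linarith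
    _ = phi x p := (phi_apply x p).symm

lemma newton_phi {f : TropPoly n} {q : (Fin n → ℝ) × ℝ} (hq : q ∈ f.newton) (x : Fin n → ℝ) :
    f.eval x ≤ phi x q := by
  have hconv : Convex ℝ {p : (Fin n → ℝ) × ℝ | f.eval x ≤ phi x p} := by
    intro p hp q' hq' a b ha hb hab
    simp only [Set.mem_setOf_eq] at *
    rw [phi_add, phi_smul, phi_smul]
    have h1 := mul_le_mul_of_nonneg_left hp ha
    have h2 := mul_le_mul_of_nonneg_left hq' hb
    have h3 : a * f.eval x + b * f.eval x = f.eval x := by rw [← add_mul, hab, one_mul]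
    linarith
  exact convexHull_min (fun p hp => gens_phi_le hp x) hconv hq

lemma isClosed_hull_gensJ (g : TropPoly n) : IsClosed (convexHull ℝ (gensJ g)) := by
  classical
  set Jset : Finset (Fin g.k) :=
    Finset.univ.filter (fun j => (interior (Dset g j)).Nonempty) with hJset
  set pts : Set ((Fin n → ℝ) × ℝ) := vtx g '' (Jset : Set (Fin g.k)) with hpts
  set V : Set ((Fin n → ℝ) × ℝ) := {p | p.1 = 0 ∧ 0 ≤ p.2} with hV
  have hVconv : Convex ℝ V := by
    rintro p ⟨hp1, hp2⟩ q ⟨hq1, hq2⟩ a b ha hb hab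
    constructor
    · show (a • p + b • q).1 = 0
      simp only [Prod.fst_add, Prod.smul_fst, hp1, hq1, smul_zero, add_zero]
    · show 0 ≤ (a • p + b • q).2
      simp only [Prod.snd_add, Prod.smul_snd, smul_eq_mul]
      exact add_nonneg (mul_nonneg ha hp2) (mul_nonneg hb hq2)
  have hVcl : IsClosed V := by
    apply IsClosed.inter
    · exact isClosed_eq continuous_fst continuous_const
    · exact isClosed_le continuous_const continuous_snd
  have hptsf : pts.Finite := (Jset : Set (Fin g.k)).toFinite.image _
  have htrans : ∀ r : ℝ, 0 ≤ r → ∀ p ∈ convexHull ℝ (gensJ g),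
      p + ((0 : Fin n → ℝ), r) ∈ convexHull ℝ (gensJ g) := by
    intro r hr p hp
    set τ := (AffineEquiv.constVAdd ℝ ((Fin n → ℝ) × ℝ) ((0 : Fin n → ℝ), r)).toAffineMap with hτ
    have hτapp : ∀ q : (Fin n → ℝ) × ℝ, τ q = ((0 : Fin n → ℝ), r) + q := fun q => rfl
    have himg : τ '' convexHull ℝ (gensJ g) = convexHull ℝ (τ '' gensJ g) :=
      AffineMap.image_convexHull τ (gensJ g)
    have hsub2 : τ '' gensJ g ⊆ gensJ g := by
      rintro _ ⟨p', ⟨j, hj, h1, h2⟩, rfl⟩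
      refine ⟨j, hj, ?_, ?_⟩
      · rw [hτapp]
        show (0 : Fin n → ℝ) + p'.1 = _
        rw [zero_add, h1]
      · rw [hτapp]
        show g.c j ≤ r + p'.2
        linarith
    have hmem : τ p ∈ convexHull ℝ (gensJ g) := by
      have h1 : τ p ∈ τ '' convexHull ℝ (gensJ g) := Set.mem_image_of_mem τ hp
      rw [himg] at h1
      exact convexHull_mono hsub2 h1
    rw [hτapp] at hmem
    rwa [add_comm] at hmem
  have heq : convexHull ℝ (gensJ g) = convexHull ℝ pts + V := by
    apply Set.Subset.antisymm
    · apply convexHull_min ?_ ((convex_convexHull ℝ pts).add hVconv)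
      rintro p ⟨j, hj, h1, h2⟩
      refine ⟨vtx g j, ?_, ((0 : Fin n → ℝ), p.2 - g.c j), ⟨rfl, by show (0:ℝ) ≤ p.2 - g.c j; linarith⟩, ?_⟩
      · exact subset_convexHull ℝ _
          ⟨j, Finset.mem_coe.mpr (Finset.mem_filter.mpr ⟨Finset.mem_univ j, hj⟩), rfl⟩
      · refine Prod.ext ?_ ?_
        · show (vtx g j).1 + 0 = p.1
          rw [add_zero, h1]; rfl
        · show g.c j + (p.2 - g.c j) = p.2
          ring
    · rintro q ⟨q1, hq1, q2, hq2, rfl⟩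
      have hsub : convexHull ℝ pts ⊆ convexHull ℝ (gensJ g) := by
        apply convexHull_mono
        rintro _ ⟨j, hjJ, rfl⟩
        have : (interior (Dset g j)).Nonempty :=
          (Finset.mem_filter.mp (Finset.mem_coe.mp hjJ)).2
        exact ⟨j, this, rfl, le_rfl⟩
      have hrw : q1 + q2 = q1 + ((0 : Fin n → ℝ), q2.2) := by
        refine Prod.ext ?_ ?_
        · show q1.1 + q2.1 = q1.1 + 0
          rw [hq2.1]
        · rfl
      show q1 + q2 ∈ convexHull ℝ (gensJ g)
      rw [hrw]
      exact htrans q2.2 hq2.2 q1 (hsub hq1)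
  rw [heq]
  exact hVcl.add_left_of_isCompact (hptsf.isCompact_convexHull ℝ)

lemma newton_sandwich (g : TropPoly n) :
    g.newton = {p | ∀ x, g.eval x ≤ phi x p} ∧ g.newton = convexHull ℝ (gensJ g) := by
  classical
  have hA : convexHull ℝ (gensJ g) ⊆ g.newton := by
    apply convexHull_mono
    rintro p ⟨j, _, h1, h2⟩
    exact ⟨j, h1, h2⟩
  have hB : g.newton ⊆ {p | ∀ x, g.eval x ≤ phi x p} := fun q hq x => newton_phi hq x
  have hC : {p : (Fin n → ℝ) × ℝ | ∀ x, g.eval x ≤ phi x p} ⊆ convexHull ℝ (gensJ g) := by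
    intro p hp
    by_contra hpn
    obtain ⟨ψ, u, hu1, hu2⟩ := geometric_hahn_banach_point_closed
      (convex_convexHull ℝ _) (isClosed_hull_gensJ g) hpn
    set x' : Fin n → ℝ := fun j => ψ (Pi.single j 1, 0) with hx'
    set s : ℝ := ψ (0, 1) with hs'
    have hrepr : ∀ q, ψ q = dotp x' q.1 + s * q.2 := clm_repr ψ
    have hgen : ∀ j : Fin g.k, (interior (Dset g j)).Nonempty → ∀ r, g.c j ≤ r →
        u < dotp x' (fun k => (g.a j k : ℝ)) + s * r := by
      intro j hj r hr
      have hmem : ((fun k => (g.a j k : ℝ)), r) ∈ gensJ g := ⟨j, hj, rfl, hr⟩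
      have := hu2 _ (subset_convexHull ℝ _ hmem)
      rwa [hrepr] at this
    obtain ⟨j0, hj0, _⟩ := coverage g 0
    have hs : 0 ≤ s := by
      by_contra hsn
      push_neg at hsn
      set A := dotp x' (fun k => (g.a j0 k : ℝ)) with hA'
      set r := max (g.c j0) ((u - 1 - A) / s) with hr'
      have h1 : g.c j0 ≤ r := le_max_left _ _
      have h2 : (u - 1 - A) / s ≤ r := le_max_right _ _
      have h3 : r * s ≤ u - 1 - A := (div_le_iff_of_neg hsn).mp h2
      have h4 := hgen j0 hj0 r h1
      have h5 : s * r = r * s := mul_comm s r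
      linarith
    rcases hs.lt_or_eq with hspos | hszero
    · set x := s⁻¹ • x' with hx
      have hsne : s ≠ 0 := ne_of_gt hspos
      have hphi : ∀ q, phi x q = s⁻¹ * ψ q := by
        intro q
        rw [hx, phi_smul_arg, hrepr, mul_add]
        congr 1
        rw [← mul_assoc, inv_mul_cancel₀ hsne, one_mul]
      obtain ⟨j, hjgood, hjx⟩ := coverage g x
      have h1 : u < ψ (vtx g j) := hu2 _ (subset_convexHull ℝ _ ⟨j, hjgood, rfl, le_rfl⟩)
      have h2 : g.eval x = s⁻¹ * ψ (vtx g j) := by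
        rw [← Dset_eval hjx, ← phi_vtx g j x]
        exact hphi (vtx g j)
      have h3 : g.eval x ≤ phi x p := hp x
      rw [hphi p] at h3
      have h4 : s * g.eval x = ψ (vtx g j) := by
        rw [h2, ← mul_assoc, mul_inv_cancel₀ (ne_of_gt hspos), one_mul]
      have h5 : s * g.eval x ≤ ψ p := by
        calc s * g.eval x ≤ s * (s⁻¹ * ψ p) := mul_le_mul_of_nonneg_left h3 hspos.le
          _ = ψ p := by rw [← mul_assoc, mul_inv_cancel₀ (ne_of_gt hspos), one_mul]
      linarith [hu1]
    · have hdot : ∀ q, ψ q = dotp x' q.1 := fun q => by rw [hrepr, ← hszero]; ring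
      set cmin : ℝ := Finset.univ.inf' ⟨⟨0, g.hk⟩, Finset.mem_univ _⟩ g.c with hcmin
      have hfin : ∀ lam : ℝ, 0 < lam → lam * u + cmin ≤ lam * dotp x' p.1 + p.2 := by
        intro lam hlam
        obtain ⟨j, hjg, hjx⟩ := coverage g (lam • x')
        have h1 : g.eval (lam • x') ≤ phi (lam • x') p := hp _
        rw [phi_smul_arg] at h1
        have h2 : g.mono j (lam • x') = g.eval (lam • x') := Dset_eval hjx
        have h3 : g.mono j (lam • x') = lam * dotp x' (fun k => (g.a j k : ℝ)) + g.c j :=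
          mono_smul_arg g j lam x'
        have h4 : u < dotp x' (fun k => (g.a j k : ℝ)) := by
          have hh := hgen j hjg (g.c j) le_rfl
          rw [← hszero] at hh
          simpa using hh
        have h5 : cmin ≤ g.c j := Finset.inf'_le _ (Finset.mem_univ j)
        linarith [mul_lt_mul_of_pos_left h4 hlam]
      have hle : u ≤ dotp x' p.1 := by
        by_contra hgt
        push_neg at hgt
        set d := u - dotp x' p.1 with hd'
        have hd : 0 < d := by rw [hd']; linarith
        set lam := (|p.2 - cmin| + 1) / d with hlam'
        have hlam : 0 < lam := by positivity
        have h6 := hfin lam hlam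
        have h7 : lam * d = |p.2 - cmin| + 1 := by
          rw [hlam', div_mul_cancel₀ _ (ne_of_gt hd)]
        have h8 : p.2 - cmin ≤ |p.2 - cmin| := le_abs_self _
        have h9 : lam * dotp x' p.1 = lam * u - lam * d := by rw [hd']; ring
        linarith
      have hψp : ψ p = dotp x' p.1 := hdot p
      linarith [hu1]
  exact ⟨Set.Subset.antisymm hB (Set.Subset.trans hC hA),
    Set.Subset.antisymm (Set.Subset.trans hB hC) hA⟩

end Newton
section Farkas

variable {n : ℕ}

lemma farkas_bound {m : ℕ} (B : Fin m → ((Fin n → ℝ) × ℝ)) (D : (Fin n → ℝ) × ℝ)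
    (x0 : Fin n → ℝ) (hfeas : ∀ i, 0 ≤ phi x0 (B i))
    (hyp : ∀ x, (∀ i, 0 ≤ phi x (B i)) → phi x D ≤ 0) :
    ∃ C : ℝ, 0 ≤ C ∧ ∀ (x : Fin n → ℝ) (G : ℝ), 0 ≤ G → (∀ i, -phi x (B i) ≤ G) →
      phi x D ≤ C * G := by
  classical
  set S : Set ((Fin n → ℝ) × ℝ) := Set.range B ∪ {((0 : Fin n → ℝ), (1 : ℝ))} with hS
  have hSfin : S.Finite := (Set.finite_range B).union (Set.finite_singleton _)
  have hmem : -D ∈ coneGen S := by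
    by_contra hno
    obtain ⟨ψ, hψ1, hψ2⟩ := coneGen_separation hSfin hno
    set x' : Fin n → ℝ := fun j => ψ (Pi.single j 1, 0) with hx'
    set s : ℝ := ψ (0, 1) with hsdef
    have hrepr : ∀ q, ψ q = dotp x' q.1 + s * q.2 := clm_repr ψ
    have hs : 0 ≤ s := hψ1 _ (Set.mem_union_right _ rfl)
    have hψD : 0 < ψ D := by
      have h := hψ2
      rw [map_neg] at h
      linarith
    have hB0 : ∀ i, 0 ≤ ψ (B i) := fun i => hψ1 _ (Set.mem_union_left _ (Set.mem_range_self i))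
    rcases hs.lt_or_eq with hspos | hszero
    · have hsne : s ≠ 0 := ne_of_gt hspos
      set x := s⁻¹ • x' with hx
      have hphi : ∀ q, phi x q = s⁻¹ * ψ q := by
        intro q
        rw [hx, phi_smul_arg, hrepr, mul_add]
        congr 1
        rw [← mul_assoc, inv_mul_cancel₀ hsne, one_mul]
      have hfeas' : ∀ i, 0 ≤ phi x (B i) := by
        intro i; rw [hphi]
        exact mul_nonneg (inv_nonneg.mpr hs) (hB0 i)
      have hcon := hyp x hfeas'
      rw [hphi] at hcon
      have : 0 < s⁻¹ * ψ D := mul_pos (inv_pos.mpr hspos) hψD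
      linarith
    · have hdot : ∀ q, ψ q = dotp x' q.1 := fun q => by rw [hrepr, ← hszero]; ring
      have hDdot : 0 < dotp x' D.1 := by rw [← hdot]; exact hψD
      set lam := (|phi x0 D| + 1) / dotp x' D.1 with hlamdef
      have hlampos : 0 < lam := by positivity
      have hfeas' : ∀ i, 0 ≤ phi (x0 + lam • x') (B i) := by
        intro i
        rw [phi_shift]
        have h2 : 0 ≤ dotp x' (B i).1 := by rw [← hdot]; exact hB0 i
        have := mul_nonneg hlampos.le h2
        linarith [hfeas i]
      have hcon := hyp _ hfeas'
      rw [phi_shift] at hcon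
      have h3 : lam * dotp x' D.1 = |phi x0 D| + 1 := by
        rw [hlamdef, div_mul_cancel₀ _ (ne_of_gt hDdot)]
      have h4 := neg_abs_le (phi x0 D)
      linarith
  obtain ⟨M, t, p, ht, hpS, hsum⟩ := hmem
  refine ⟨∑ i, t i, Finset.sum_nonneg fun i _ => ht i, ?_⟩
  intro x G hG hBle
  have h1 : phi x D = -∑ i, t i * phi x (p i) := by
    have hh := congrArg (phi x) hsum
    rw [phi_neg, phi_sum] at hh
    have hh2 : ∑ i, phi x (t i • p i) = ∑ i, t i * phi x (p i) :=
      Finset.sum_congr rfl fun i _ => phi_smul x (t i) (p i)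
    rw [hh2] at hh
    linarith
  have h2 : ∀ i, t i * (-phi x (p i)) ≤ t i * G := by
    intro i
    apply mul_le_mul_of_nonneg_left ?_ (ht i)
    rcases (hpS i : p i ∈ Set.range B ∪ {((0 : Fin n → ℝ), (1 : ℝ))}) with hBi | hone
    · obtain ⟨i0, hi0⟩ := hBi
      rw [← hi0]
      exact hBle i0
    · have hpe : p i = ((0 : Fin n → ℝ), (1 : ℝ)) := Set.mem_singleton_iff.mp hone
      rw [hpe]
      have hone1 : phi x ((0 : Fin n → ℝ), (1 : ℝ)) = 1 := by simp [phi]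
      rw [hone1]
      linarith
  calc phi x D = ∑ i, t i * (-phi x (p i)) := by
        rw [h1]
        simp [mul_neg]
    _ ≤ ∑ i, t i * G := Finset.sum_le_sum fun i _ => h2 i
    _ = (∑ i, t i) * G := (Finset.sum_mul _ _ _).symm

lemma key_pair (f g : TropPoly n) (j : Fin g.k) (σ l : Fin f.k) (x0 : Fin n → ℝ)
    (hx0 : x0 ∈ Dset g j)
    (hyp : ∀ x ∈ Dset g j, f.mono σ x ≤ f.mono l x) :
    ∃ t : ℝ, 0 < t ∧ ∀ x, t * (f.mono σ x - f.mono l x) ≤ g.mono j x - g.eval x := by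
  set B : Fin g.k → ((Fin n → ℝ) × ℝ) := fun m => vtx g m - vtx g j with hB
  set D := vtx f σ - vtx f l with hD
  have hphiB : ∀ (x : Fin n → ℝ) m, phi x (B m) = g.mono m x - g.mono j x := by
    intro x m
    rw [hB]
    rw [phi_sub, phi_vtx, phi_vtx]
  have hphiD : ∀ x : Fin n → ℝ, phi x D = f.mono σ x - f.mono l x := by
    intro x
    rw [hD, phi_sub, phi_vtx, phi_vtx]
  have hDset : ∀ x : Fin n → ℝ, (∀ m, 0 ≤ phi x (B m)) ↔ x ∈ Dset g j := by
    intro x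
    constructor
    · intro hx m
      have := hx m
      rw [hphiB] at this
      linarith
    · intro hx m
      rw [hphiB]
      linarith [hx m]
  obtain ⟨C, hC0, hC⟩ := farkas_bound B D x0 (fun m => (hDset x0).mpr hx0 m)
    (fun x hx => by rw [hphiD]; linarith [hyp x ((hDset x).mp hx)])
  refine ⟨(1 + C)⁻¹, by positivity, fun x => ?_⟩
  have hG0 : 0 ≤ g.mono j x - g.eval x := by linarith [eval_le g x j]
  have hBle : ∀ m, -phi x (B m) ≤ g.mono j x - g.eval x := by
    intro m
    rw [hphiB]
    linarith [eval_le g x m]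
  have hmain := hC x _ hG0 hBle
  rw [hphiD] at hmain
  have h1 : f.mono σ x - f.mono l x ≤ (1 + C) * (g.mono j x - g.eval x) := by nlinarith
  calc (1 + C)⁻¹ * (f.mono σ x - f.mono l x)
      ≤ (1 + C)⁻¹ * ((1 + C) * (g.mono j x - g.eval x)) :=
        mul_le_mul_of_nonneg_left h1 (by positivity)
    _ = g.mono j x - g.eval x := by
        rw [← mul_assoc, inv_mul_cancel₀ (by positivity), one_mul]

end Farkas
/-- if `Trop(f) ⊆ Trop(g)`, there is a single ratio `t₀ > 0` such
that a shifted copy of the homothety `t₀ · N(f)` is inscribed in `N(g)` at any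
arbitrarily chosen point `w ∈ N(g)`. -/
theorem inscribed_at_every_point {n : ℕ} (f g : TropPoly n)
    (h : f.tropSet ⊆ g.tropSet) :
    ∃ t₀ : ℝ, 0 < t₀ ∧ ∀ w ∈ g.newton,
      ∃ b : (Fin n → ℝ) × ℝ,
        w ∈ (fun y => t₀ • y + b) '' f.newton ∧
          (fun y => t₀ • y + b) '' f.newton ⊆ g.newton := by
  classical
  obtain ⟨hdual, hhull⟩ := newton_sandwich g
  have hσex : ∀ j : Fin g.k, (interior (Dset g j)).Nonempty →
      ∃ σ : Fin f.k, ∀ x ∈ Dset g j, ∀ l, f.mono σ x ≤ f.mono l x := exists_sigma f g h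
  choose σfun hσfun using hσex
  have hpair : ∀ (j : Fin g.k) (hj : (interior (Dset g j)).Nonempty) (l : Fin f.k),
      ∃ t : ℝ, 0 < t ∧
        ∀ x, t * (f.mono (σfun j hj) x - f.mono l x) ≤ g.mono j x - g.eval x := by
    intro j hj l
    have hj' := hj
    obtain ⟨x0, hx0⟩ := hj'
    exact key_pair f g j (σfun j hj) l x0 (interior_subset hx0)
      (fun x hx => hσfun j hj x hx l)
  choose tf htf0 htf using hpair
  set tt : Fin g.k × Fin f.k → ℝ := fun q =>
    if hj : (interior (Dset g q.1)).Nonempty then tf q.1 hj q.2 else 1 with htt'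
  have httpos : ∀ q, 0 < tt q := by
    intro q
    by_cases hj : (interior (Dset g q.1)).Nonempty
    · simp only [htt', dif_pos hj]; exact htf0 q.1 hj q.2
    · simp only [htt', dif_neg hj]; exact one_pos
  have hne : (Finset.univ : Finset (Fin g.k × Fin f.k)).Nonempty :=
    ⟨(⟨0, g.hk⟩, ⟨0, f.hk⟩), Finset.mem_univ _⟩
  set t₀ := Finset.univ.inf' hne tt with ht₀'
  have ht₀ : 0 < t₀ := by
    rw [ht₀', Finset.lt_inf'_iff]
    exact fun q _ => httpos q
  have KEY : ∀ (j : Fin g.k) (hj : (interior (Dset g j)).Nonempty) (x : Fin n → ℝ),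
      t₀ * (f.mono (σfun j hj) x - f.eval x) ≤ g.mono j x - g.eval x := by
    intro j hj x
    obtain ⟨l, hl⟩ := exists_eval f x
    have h1 := htf j hj l x
    have h2 : t₀ ≤ tt (j, l) := Finset.inf'_le _ (Finset.mem_univ _)
    have h3 : tt (j, l) = tf j hj l := by simp only [htt', dif_pos hj]
    have h4 : 0 ≤ f.mono (σfun j hj) x - f.mono l x := by
      rw [hl]
      linarith [eval_le f x (σfun j hj)]
    rw [← hl]
    calc t₀ * (f.mono (σfun j hj) x - f.mono l x)
        ≤ tf j hj l * (f.mono (σfun j hj) x - f.mono l x) := by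
          apply mul_le_mul_of_nonneg_right ?_ h4
          rw [← h3]; exact h2
      _ ≤ g.mono j x - g.eval x := h1
  refine ⟨t₀, ht₀, ?_⟩
  intro w hw
  rw [hhull, _root_.convexHull_eq] at hw
  obtain ⟨ι, tF, wt, z, hwt0, hwt1, hz, hcenter⟩ := hw
  rw [Finset.centerMass_eq_of_sum_1 _ _ hwt1] at hcenter
  have hzmem : ∀ i ∈ tF, ∃ j : Fin g.k, (interior (Dset g j)).Nonempty ∧
      (z i).1 = (fun k => (g.a j k : ℝ)) ∧ g.c j ≤ (z i).2 := fun i hi => hz i hi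
  haveI : Nonempty (Fin g.k) := ⟨⟨0, g.hk⟩⟩
  choose! jf hj1 hj2 hj3 using hzmem
  set vtotal : ι → ((Fin n → ℝ) × ℝ) := fun i =>
    if hi : i ∈ tF then vtx f (σfun (jf i) (hj1 i hi)) else 0 with hvtot
  set u := ∑ i ∈ tF, wt i • vtotal i with hu
  have humem : u ∈ f.newton := by
    rw [hu]
    unfold TropPoly.newton
    apply Convex.sum_mem (convex_convexHull ℝ _) hwt0 hwt1
    intro i hi
    simp only [hvtot, dif_pos hi]
    exact subset_convexHull ℝ _ ⟨σfun (jf i) (hj1 i hi), rfl, le_rfl⟩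
  set b := w - t₀ • u with hb
  refine ⟨b, ⟨u, humem, ?_⟩, ?_⟩
  · show t₀ • u + b = w
    rw [hb, add_comm, sub_add_cancel]
  · rintro q' ⟨q, hq, rfl⟩
    rw [hdual]
    simp only [Set.mem_setOf_eq]
    intro x
    show g.eval x ≤ phi x (t₀ • q + b)
    have hq' : f.eval x ≤ phi x q := newton_phi hq x
    have hphiw : phi x w = ∑ i ∈ tF, wt i * phi x (z i) := by
      rw [← hcenter, phi_sum]
      exact Finset.sum_congr rfl fun i _ => phi_smul x (wt i) (z i)
    have hphiu : phi x u = ∑ i ∈ tF, wt i * phi x (vtotal i) := by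
      rw [hu, phi_sum]
      exact Finset.sum_congr rfl fun i _ => phi_smul x (wt i) (vtotal i)
    have hexp : phi x (t₀ • q + b) = t₀ * phi x q + (phi x w - t₀ * phi x u) := by
      rw [hb, phi_add, phi_smul, phi_sub, phi_smul]
    rw [hexp, hphiw, hphiu]
    have hterm : ∀ i ∈ tF,
        wt i * g.eval x ≤ wt i * (t₀ * phi x q + (phi x (z i) - t₀ * phi x (vtotal i))) := by
      intro i hi
      apply mul_le_mul_of_nonneg_left ?_ (hwt0 i hi)
      have hz1 : g.mono (jf i) x ≤ phi x (z i) := by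
        have hzz : g.mono (jf i) x = dotp x (z i).1 + g.c (jf i) := by
          rw [hj2 i hi, ← phi_vtx g (jf i) x]; rfl
        rw [phi_apply, hzz]
        linarith [hj3 i hi]
      have hv : phi x (vtotal i) = f.mono (σfun (jf i) (hj1 i hi)) x := by
        simp only [hvtot, dif_pos hi]
        exact phi_vtx f _ x
      have hk := KEY (jf i) (hj1 i hi) x
      have hfq : t₀ * f.eval x ≤ t₀ * phi x q := mul_le_mul_of_nonneg_left hq' ht₀.le
      rw [hv]
      linarith
    calc g.eval x = ∑ i ∈ tF, wt i * g.eval x := by rw [← Finset.sum_mul, hwt1, one_mul]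
      _ ≤ ∑ i ∈ tF, wt i * (t₀ * phi x q + (phi x (z i) - t₀ * phi x (vtotal i))) :=
          Finset.sum_le_sum hterm
      _ = t₀ * phi x q +
          (∑ i ∈ tF, wt i * phi x (z i) - t₀ * ∑ i ∈ tF, wt i * phi x (vtotal i)) := by
          rw [Finset.sum_congr rfl (fun i (_ : i ∈ tF) => (by ring :
            wt i * (t₀ * phi x q + (phi x (z i) - t₀ * phi x (vtotal i))) =
            wt i * (t₀ * phi x q) + (wt i * phi x (z i) - t₀ * (wt i * phi x (vtotal i)))))]
          rw [Finset.sum_add_distrib, Finset.sum_sub_distrib, ← Finset.sum_mul, hwt1, one_mul,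
            ← Finset.mul_sum]
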